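/- Let D=(V,A) be a digraph and S a multiset of V. There exists a packing of reachability s-arborescences in D, one rooted at each element s of S (counted with multiplicity), if and only if d_A^-(X) ≥ |S_{P_D^X}| − |S_X| for every subset X of V. (Kamiyama–Katoh–Takizawa theorem) -/

import Mathlib

/- Common definitions for formalizing packing-of-arborescences theorems.

Conventions:
* A digraph on a finite vertex type `V` is given by a finite multiset of arcs
  `A : Multiset (V × V)`, an arc `(u, v)` having tail `u` and head `v`.
* An undirected (multi)graph is given by a multiset of edges `E : Multiset (V × V)`,
  an edge being recorded as an (arbitrarily ordered) pair of its endpoints.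
* A multiset `S` of vertices (e.g. of roots) is given by a finite index type `S`
  together with a placement map `π : S → V`; the multiplicity of a vertex `v` is
  the size of the fiber over `v`.
* A dypergraph is given by a multiset `𝒜 : Multiset (Finset V × V)` of dyperedges
  `(Z, z)` with tail set `Z` and head `z`; a hypergraph by a multiset
  `ℰ : Multiset (Finset V)` of hyperedges. -/

attribute [local instance] Classical.propDecidable

noncomputable section

namespace ArborPaper

variable {V : Type*} [Fintype V] [DecidableEq V]

/-- An arc `a = (u, v)` (tail `u`, head `v`) enters `X` if its head is in `X`
and its tail is outside. -/
def arcEnters (a : V × V) (X : Finset V) : Prop := a.2 ∈ X ∧ a.1 ∉ X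

/-- An undirected edge (given by a pair of endpoints) enters `X` if exactly one of
its endpoints is in `X`. -/
def edgeEnters (e : V × V) (X : Finset V) : Prop :=
  (e.1 ∈ X ∧ e.2 ∉ X) ∨ (e.2 ∈ X ∧ e.1 ∉ X)

/-- The in-degree `d⁻_A(X)` of a vertex set `X`. -/
def inDeg (A : Multiset (V × V)) (X : Finset V) : ℕ :=
  (A.filter fun a => arcEnters a X).card

/-- The in-degree of a single vertex. -/
def inDegV (A : Multiset (V × V)) (v : V) : ℕ :=
  (A.filter fun a => a.2 = v).card

/-- Reachability by a directed path using the arcs of `A`. -/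
def Reaches (A : Multiset (V × V)) (u v : V) : Prop :=
  Relation.ReflTransGen (fun x y => (x, y) ∈ A) u v

/-- `P_D^X` : the set of vertices from which some vertex of `X` is reachable. -/
def PD (A : Multiset (V × V)) (X : Finset V) : Finset V :=
  Finset.univ.filter fun u => ∃ v ∈ X, Reaches A u v

/-- `Q_D^X` : the set of vertices reachable from some vertex of `X`. -/
def QD (A : Multiset (V × V)) (X : Finset V) : Finset V :=
  Finset.univ.filter fun v => ∃ u ∈ X, Reaches A u v

/-- `C` is a strongly connected component of the digraph `(V, A)`. -/
def IsSCCD (A : Multiset (V × V)) (C : Finset V) : Prop :=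
  ∃ v : V, C = Finset.univ.filter fun u => Reaches A u v ∧ Reaches A v u

/-- `B` is an `s`-arborescence with vertex set `U` : all arcs lie inside `U`,
every vertex of `U` other than `s` has in-degree exactly `1`, the root has
in-degree `0`, and every vertex of `U` is reachable from `s`
(equivalently: no circuit and all in-degrees of non-root vertices equal `1`). -/
def IsArborOn (B : Multiset (V × V)) (U : Finset V) (s : V) : Prop :=
  s ∈ U ∧ (∀ a ∈ B, a.1 ∈ U ∧ a.2 ∈ U) ∧
  (∀ v ∈ U, v ≠ s → inDegV B v = 1) ∧ inDegV B s = 0 ∧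
  ∀ v ∈ U, Reaches B s v

/-- `B` is a spanning `s`-arborescence (vertex set all of `V`). -/
def IsSpanningArbor (B : Multiset (V × V)) (s : V) : Prop :=
  IsArborOn B Finset.univ s

/-- One step along a mixed graph: an arc of `A`, or an edge of `E` in either direction. -/
def MStep (E A : Multiset (V × V)) (u v : V) : Prop :=
  (u, v) ∈ A ∨ (u, v) ∈ E ∨ (v, u) ∈ E

/-- Reachability by a mixed path in the mixed graph `(V, E ∪ A)`. -/
def MReaches (E A : Multiset (V × V)) (u v : V) : Prop :=
  Relation.ReflTransGen (MStep E A) u v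

/-- `P_F^X` for a mixed graph `F = (V, E ∪ A)`. -/
def PF (E A : Multiset (V × V)) (X : Finset V) : Finset V :=
  Finset.univ.filter fun u => ∃ v ∈ X, MReaches E A u v

/-- `Q_F^X` for a mixed graph `F = (V, E ∪ A)`. -/
def QF (E A : Multiset (V × V)) (X : Finset V) : Finset V :=
  Finset.univ.filter fun v => ∃ u ∈ X, MReaches E A u v

/-- `C` is a strongly connected component of the mixed graph `(V, E ∪ A)`. -/
def IsSCC (E A : Multiset (V × V)) (C : Finset V) : Prop :=
  ∃ v : V, C = Finset.univ.filter fun u => MReaches E A u v ∧ MReaches E A v u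

/-- `e_{E∪A}(𝒫)` : the number of edges of `E` and arcs of `A` entering at least one
member of the family `P`. -/
def eMixed (E A : Multiset (V × V)) (P : Finset (Finset V)) : ℕ :=
  (E.filter fun e => ∃ X ∈ P, edgeEnters e X).card +
  (A.filter fun a => ∃ X ∈ P, arcEnters a X).card

/-- A subpartition of `V` : a set of pairwise disjoint nonempty subsets. -/
def IsSubpartition (P : Finset (Finset V)) : Prop :=
  (∀ X ∈ P, X.Nonempty) ∧ ∀ X ∈ P, ∀ Y ∈ P, X ≠ Y → Disjoint X Y

/-- `Eo` is an orientation of the multiset `E` of undirected edges: each edge is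
kept or swapped. -/
def IsOrientationOf (E Eo : Multiset (V × V)) : Prop :=
  Multiset.Rel (fun e a => a = e ∨ a = Prod.swap e) E Eo

/-- The rank function of a matroid on a finite ground type `S`. -/
structure RankFn (S : Type*) [Fintype S] [DecidableEq S] where
  r : Finset S → ℕ
  rank_le_card : ∀ X : Finset S, r X ≤ X.card
  mono : ∀ ⦃X Y : Finset S⦄, X ⊆ Y → r X ≤ r Y
  submodular : ∀ X Y : Finset S, r (X ∪ Y) + r (X ∩ Y) ≤ r X + r Y

/-- `B` is a basis of `T` in the matroid with rank function `M` : an independent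
subset of `T` of full rank in `T`. -/
def RankFn.IsBasisOf {S : Type*} [Fintype S] [DecidableEq S] (M : RankFn S)
    (B T : Finset S) : Prop :=
  B ⊆ T ∧ M.r B = B.card ∧ M.r B = M.r T

/-- A dyperedge `a = (Z, z)` enters `X` if its head `z` is in `X` and some tail
vertex lies outside `X`. -/
def dypEnters (a : Finset V × V) (X : Finset V) : Prop :=
  a.2 ∈ X ∧ (a.1 \ X).Nonempty

/-- The in-degree `d⁻_𝒜(X)` in a dypergraph. -/
def dypInDeg (𝒜 : Multiset (Finset V × V)) (X : Finset V) : ℕ :=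
  (𝒜.filter fun a => dypEnters a X).card

/-- A hyperedge `e` enters `X` if it meets both `X` and its complement. -/
def hypEnters (e X : Finset V) : Prop := (e ∩ X).Nonempty ∧ (e \ X).Nonempty

/-- `e_{ℰ∪𝒜}(𝒫)` for a mixed hypergraph: the number of hyperedges of `ℰ` and
dyperedges of `𝒜` entering at least one member of `P`. -/
def eMH (ℰ : Multiset (Finset V)) (𝒜 : Multiset (Finset V × V))
    (P : Finset (Finset V)) : ℕ :=
  (ℰ.filter fun e => ∃ X ∈ P, hypEnters e X).card +
  (𝒜.filter fun a => ∃ X ∈ P, dypEnters a X).card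

/-- `B` is obtained from the multiset `𝒵` of dyperedges by trimming each
dyperedge `(Z, z)` to an arc `(y, z)` with `y ∈ Z`. -/
def Trims (𝒵 : Multiset (Finset V × V)) (B : Multiset (V × V)) : Prop :=
  Multiset.Rel (fun a b => b.2 = a.2 ∧ b.1 ∈ a.1) 𝒵 B

/-- `𝒟` is an orientation of the multiset `ℰ` of hyperedges: each hyperedge `X`
is replaced by a dyperedge `(X − x, x)` for some `x ∈ X`. -/
def Orients (ℰ : Multiset (Finset V)) (𝒟 : Multiset (Finset V × V)) : Prop :=
  Multiset.Rel (fun e a => a.2 ∈ e ∧ a.1 = e.erase a.2) ℰ 𝒟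

/-! Work with packings of branchings: index `i` asks for a branching with root set `U i` that
spans an out-closed set `T i ⊇ U i`. Such a packing exists iff `demand U T X ≤ d⁻(X)` for all `X`,
where `demand U T X` counts the `i` with `T i` meeting `X` and `U i` missing it; necessity is
counting. For sufficiency take a sink strong component `C` reachable from a vertex still to be
spanned. The arcs with head outside `C` serve `T i \ C` by induction on `∑ |T i|`. The arcs with
head in `C` finish the job inside `C`: on sets meeting `C` the demand is intersecting
supermodular, so Lovász's argument applies, adding an arc leaving `U i` inside a minimal tight
set, which keeps the condition. Arborescences rooted at `s` spanning `Q(s)` are the case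
`U i = {s}`, `T i = Q(s)`, in which `demand U T X = |S_{P(X)}| - |S_X|`. -/

end ArborPaper

theorem Multiset.countP_mono_left {α : Type*} {p q : α → Prop} [DecidablePred p]
    [DecidablePred q] {s : Multiset α} (h : ∀ a ∈ s, p a → q a) : s.countP p ≤ s.countP q :=
  Quotient.inductionOn s (fun l h => by simpa using List.countP_mono_left (by simpa using h)) h

namespace ArborPaper

variable {V : Type*}

section InDeg

variable {A A' : Multiset (V × V)} {X Y : Finset V}

theorem inDeg_eq_countP (A : Multiset (V × V)) (X : Finset V) :
    inDeg A X = A.countP (arcEnters · X) :=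
  (Multiset.countP_eq_card_filter _ _).symm

theorem inDeg_mono (h : A ≤ A') (X : Finset V) : inDeg A X ≤ inDeg A' X :=
  Multiset.card_le_card (Multiset.filter_le_filter _ h)

theorem inDeg_add (A A' : Multiset (V × V)) (X : Finset V) :
    inDeg (A + A') X = inDeg A X + inDeg A' X := by
  simp only [inDeg, Multiset.filter_add, Multiset.card_add]

theorem inDeg_cons (a : V × V) (A : Multiset (V × V)) (X : Finset V) :
    inDeg (a ::ₘ A) X = inDeg A X + if arcEnters a X then 1 else 0 := by
  simp only [inDeg_eq_countP, Multiset.countP_cons]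

theorem inDeg_sum {I : Type*} (s : Finset I) (B : I → Multiset (V × V)) (X : Finset V) :
    inDeg (∑ i ∈ s, B i) X = ∑ i ∈ s, inDeg (B i) X :=
  map_sum ({ toFun := (inDeg · X), map_zero' := rfl, map_add' := (inDeg_add · · X) } :
    Multiset (V × V) →+ ℕ) B s

theorem inDeg_le_inDeg_filter {p : V × V → Prop} [DecidablePred p]
    (h : ∀ a ∈ A, arcEnters a Y → arcEnters a X ∧ p a) : inDeg A Y ≤ inDeg (A.filter p) X := by
  rw [inDeg_eq_countP, inDeg_eq_countP, Multiset.countP_filter]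
  exact Multiset.countP_mono_left h

theorem exists_arc_of_inDeg_lt (h : inDeg A X < inDeg A Y) :
    ∃ a ∈ A, arcEnters a Y ∧ ¬arcEnters a X := by
  by_contra! h'
  rw [inDeg_eq_countP, inDeg_eq_countP] at h
  exact h.not_ge (Multiset.countP_mono_left h')

theorem inDeg_union_add_inDeg_inter_le [DecidableEq V] (A : Multiset (V × V)) (X Y : Finset V) :
    inDeg A (X ∪ Y) + inDeg A (X ∩ Y) ≤ inDeg A X + inDeg A Y := by
  induction A using Multiset.induction_on with
  | empty => simp [inDeg]
  | cons a A ih =>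
    simp only [inDeg_cons]
    have : (if arcEnters a (X ∪ Y) then 1 else 0) + (if arcEnters a (X ∩ Y) then 1 else 0) ≤
        (if arcEnters a X then 1 else 0) + (if arcEnters a Y then 1 else 0) := by
      simp only [arcEnters, Finset.mem_union, Finset.mem_inter]
      by_cases a.2 ∈ X <;> by_cases a.2 ∈ Y <;> by_cases a.1 ∈ X <;> by_cases a.1 ∈ Y <;>
        simp [*]
    omega

theorem inDegV_add [DecidableEq V] (B B' : Multiset (V × V)) (v : V) :
    inDegV (B + B') v = inDegV B v + inDegV B' v := by
  simp only [inDegV, Multiset.filter_add, Multiset.card_add]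

theorem inDegV_eq_zero_iff [DecidableEq V] {B : Multiset (V × V)} {v : V} :
    inDegV B v = 0 ↔ ∀ a ∈ B, a.2 ≠ v :=
  Multiset.card_eq_zero.trans Multiset.filter_eq_nil

theorem inDeg_univ [Fintype V] (A : Multiset (V × V)) : inDeg A Finset.univ = 0 := by
  simp [inDeg, arcEnters]

end InDeg

section Reach

variable {A A' : Multiset (V × V)} {T C X : Finset V} {u v : V}

theorem Reaches.mono (h : A ≤ A') (hr : Reaches A u v) : Reaches A' u v :=
  Relation.ReflTransGen.mono (fun _ _ hxy => Multiset.mem_of_le h hxy) _ _ hr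

theorem Reaches.exists_arc_leaving (P : V → Prop) (h : Reaches A u v) (hu : P u) (hv : ¬P v) :
    ∃ a ∈ A, P a.1 ∧ ¬P a.2 := by
  induction h with
  | refl => exact absurd hu hv
  | @tail b c _ hbc ih =>
    by_cases hb : P b
    · exact ⟨(b, c), hbc, hb, hv⟩
    · exact ih hb

def OutClosed (A : Multiset (V × V)) (T : Finset V) : Prop := ∀ a ∈ A, a.1 ∈ T → a.2 ∈ T

theorem OutClosed.anti (hT : OutClosed A' T) (h : A ≤ A') : OutClosed A T :=
  fun a ha => hT a (Multiset.mem_of_le h ha)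

theorem OutClosed.mem_of_reaches (hT : OutClosed A T) (hu : u ∈ T) (h : Reaches A u v) : v ∈ T := by
  induction h with
  | refl => exact hu
  | tail _ hbc ih => exact hT _ hbc ih

theorem OutClosed.subset_of_not_disjoint (hT : OutClosed A T)
    (hC : ∀ c ∈ C, ∀ c' ∈ C, Reaches A c c') (h : ¬Disjoint T C) : C ⊆ T := by
  obtain ⟨c, hcT, hcC⟩ := Finset.not_disjoint_iff.1 h
  exact fun c' hc' => hT.mem_of_reaches hcT (hC c hcC c' hc')

variable [Fintype V]

theorem mem_QD_singleton : v ∈ QD A {u} ↔ Reaches A u v := by simp [QD]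

theorem subset_PD (A : Multiset (V × V)) (X : Finset V) : X ⊆ PD A X :=
  fun v hv => by simpa [PD] using ⟨v, hv, Relation.ReflTransGen.refl⟩

theorem not_disjoint_QD_singleton_iff : ¬Disjoint (QD A {u}) X ↔ u ∈ PD A X := by
  simp [Finset.not_disjoint_iff, QD, PD, and_comm]

theorem outClosed_QD (A : Multiset (V × V)) (X : Finset V) : OutClosed A (QD A X) := by
  intro a ha h
  simp only [QD, Finset.mem_filter, Finset.mem_univ, true_and] at h ⊢
  obtain ⟨u, hu, hr⟩ := h
  exact ⟨u, hu, hr.tail ha⟩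

/-- Take `C = Q(s)` for `s ∈ Q(t)` with `|Q(s)|` minimal. -/
theorem exists_sink_component (A : Multiset (V × V)) (t : V) :
    ∃ C : Finset V, (∃ c ∈ C, Reaches A t c) ∧ OutClosed A C ∧
      ∀ c ∈ C, ∀ c' ∈ C, Reaches A c c' := by
  obtain ⟨s, hts, hmin⟩ := Finset.exists_min_image (QD A {t}) (fun s => (QD A {s}).card)
    ⟨t, mem_QD_singleton.2 .refl⟩
  refine ⟨QD A {s}, ⟨s, mem_QD_singleton.2 .refl, mem_QD_singleton.1 hts⟩, outClosed_QD A {s},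
    fun c hc c' hc' => ?_⟩
  have hsub : QD A {c} ⊆ QD A {s} := fun w hw =>
    mem_QD_singleton.2 ((mem_QD_singleton.1 hc).trans (mem_QD_singleton.1 hw))
  have hct : c ∈ QD A {t} :=
    mem_QD_singleton.2 ((mem_QD_singleton.1 hts).trans (mem_QD_singleton.1 hc))
  rw [← Finset.eq_of_subset_of_card_le hsub (hmin c hct)] at hc'
  exact mem_QD_singleton.1 hc'

end Reach

section Branching

variable [DecidableEq V] {B B₁ B₂ : Multiset (V × V)} {U W T R X : Finset V}

/-- `B` is a branching spanning `T` whose roots are the vertices of `U`. -/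
def IsBranching (B : Multiset (V × V)) (U T : Finset V) : Prop :=
  (∀ a ∈ B, a.1 ∈ T ∧ a.2 ∈ T ∧ a.2 ∉ U) ∧ (∀ v ∈ T, v ∉ U → inDegV B v = 1) ∧
    ∀ v ∈ T, ∃ u ∈ U, Reaches B u v

theorem isBranching_zero (h : T ⊆ U) : IsBranching 0 U T :=
  ⟨by simp, fun v hv hvU => absurd (h hv) hvU, fun v hv => ⟨v, h hv, .refl⟩⟩

theorem isBranching_single {x y : V} (hx : x ∈ U) (hy : y ∉ U) :
    IsBranching {(x, y)} U (insert y U) := by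
  refine ⟨by simp [hx, hy], fun v hv hvU => ?_, fun v hv => ?_⟩
  · obtain rfl : v = y := by simpa [hvU] using hv
    simp [inDegV, Multiset.filter_singleton]
  · rcases Finset.mem_insert.1 hv with rfl | hv
    · exact ⟨x, hx, .single (Multiset.mem_singleton_self _)⟩
    · exact ⟨v, hv, .refl⟩

theorem IsBranching.trans (h₁ : IsBranching B₁ U W) (h₂ : IsBranching B₂ W T) (hUW : U ⊆ W)
    (hWT : W ⊆ T) : IsBranching (B₁ + B₂) U T := by
  obtain ⟨arcs₁, deg₁, reach₁⟩ := h₁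
  obtain ⟨arcs₂, deg₂, reach₂⟩ := h₂
  refine ⟨fun a ha => ?_, fun v hv hvU => ?_, fun v hv => ?_⟩
  · rcases Multiset.mem_add.1 ha with ha | ha
    · obtain ⟨h1, h2, h3⟩ := arcs₁ a ha
      exact ⟨hWT h1, hWT h2, h3⟩
    · obtain ⟨h1, h2, h3⟩ := arcs₂ a ha
      exact ⟨h1, h2, fun h => h3 (hUW h)⟩
  · rw [inDegV_add]
    by_cases hvW : v ∈ W
    · rw [deg₁ v hvW hvU, inDegV_eq_zero_iff.2 fun a ha (h : a.2 = v) => (arcs₂ a ha).2.2 (h ▸ hvW)]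
    · rw [deg₂ v hv hvW, inDegV_eq_zero_iff.2 fun a ha (h : a.2 = v) => hvW (h ▸ (arcs₁ a ha).2.1)]
  · obtain ⟨w, hw, hwv⟩ := reach₂ v hv
    obtain ⟨u, hu, huw⟩ := reach₁ w hw
    exact ⟨u, hu,
      (huw.mono (Multiset.le_add_right _ _)).trans (hwv.mono (Multiset.le_add_left _ _))⟩

theorem IsBranching.union_of_disjoint (h : IsBranching B U T) (hR : Disjoint T R) :
    IsBranching B (U ∪ R) (T ∪ R) := by
  obtain ⟨arcs, deg, reach⟩ := h
  refine ⟨fun a ha => ?_, fun v hv hvUR => ?_, fun v hv => ?_⟩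
  · obtain ⟨h1, h2, h3⟩ := arcs a ha
    simp [h1, h2, h3, Finset.disjoint_left.1 hR h2]
  · simp only [Finset.mem_union, not_or] at hv hvUR
    exact deg v (hv.resolve_right hvUR.2) hvUR.1
  · rcases Finset.mem_union.1 hv with hv | hv
    · obtain ⟨u, hu, huv⟩ := reach v hv
      exact ⟨u, Finset.mem_union_left _ hu, huv⟩
    · exact ⟨v, Finset.mem_union_right _ hv, .refl⟩

theorem IsBranching.inDeg_pos (h : IsBranching B U T) (hU : Disjoint U X) (hT : ¬Disjoint T X) :
    0 < inDeg B X := by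
  obtain ⟨t, htT, htX⟩ := Finset.not_disjoint_iff.1 hT
  obtain ⟨u, hu, hut⟩ := h.2.2 t htT
  obtain ⟨a, ha, h1, h2⟩ := hut.exists_arc_leaving (· ∉ X) (Finset.disjoint_left.1 hU hu) (by simpa)
  exact Multiset.card_pos_iff_exists_mem.2 ⟨a, Multiset.mem_filter.2 ⟨ha, not_not.1 h2, h1⟩⟩

theorem isArborOn_iff_isBranching {r : V} : IsArborOn B T r ↔ r ∈ T ∧ IsBranching B {r} T := by
  simp only [IsArborOn, IsBranching, Finset.mem_singleton, exists_eq_left]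
  constructor
  · rintro ⟨hr, arcs, deg, degr, reach⟩
    exact ⟨hr, fun a ha => ⟨(arcs a ha).1, (arcs a ha).2, inDegV_eq_zero_iff.1 degr a ha⟩, deg,
      reach⟩
  · rintro ⟨hr, arcs, deg, reach⟩
    exact ⟨hr, fun a ha => ⟨(arcs a ha).1, (arcs a ha).2.1⟩, deg,
      inDegV_eq_zero_iff.2 fun a ha => (arcs a ha).2.2, reach⟩

end Branching

section Packing

variable [DecidableEq V] {I : Type*} [Fintype I] {A A₁ A₂ : Multiset (V × V)}
  {U W T R : I → Finset V}

def HasBranchingPacking (A : Multiset (V × V)) (U T : I → Finset V) : Prop :=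
  ∃ B : I → Multiset (V × V), ∑ i, B i ≤ A ∧ ∀ i, IsBranching (B i) (U i) (T i)

theorem hasBranchingPacking_of_subset (h : ∀ i, T i ⊆ U i) : HasBranchingPacking A U T :=
  ⟨0, by simp, fun i => isBranching_zero (h i)⟩

theorem HasBranchingPacking.trans (h₁ : HasBranchingPacking A₁ U W)
    (h₂ : HasBranchingPacking A₂ W T) (hUW : ∀ i, U i ⊆ W i) (hWT : ∀ i, W i ⊆ T i) :
    HasBranchingPacking (A₁ + A₂) U T := by
  obtain ⟨B₁, hB₁, h₁⟩ := h₁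
  obtain ⟨B₂, hB₂, h₂⟩ := h₂
  refine ⟨B₁ + B₂, ?_, fun i => (h₁ i).trans (h₂ i) (hUW i) (hWT i)⟩
  simpa only [Pi.add_apply, Finset.sum_add_distrib] using add_le_add hB₁ hB₂

theorem HasBranchingPacking.union_of_disjoint (h : HasBranchingPacking A U T)
    (hR : ∀ i, Disjoint (T i) (R i)) :
    HasBranchingPacking A (fun i => U i ∪ R i) (fun i => T i ∪ R i) :=
  let ⟨B, hB, h⟩ := h
  ⟨B, hB, fun i => (h i).union_of_disjoint (hR i)⟩

theorem hasBranchingPacking_single [DecidableEq I] {i : I} {x y : V}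
    (hx : x ∈ U i) (hy : y ∉ U i) :
    HasBranchingPacking {(x, y)} U (Function.update U i (insert y (U i))) := by
  refine ⟨Pi.single i {(x, y)}, by simp [Finset.sum_pi_single'], fun j => ?_⟩
  by_cases hj : j = i
  · subst hj
    simpa using isBranching_single hx hy
  · simpa [hj] using isBranching_zero le_rfl

end Packing

section Demand

variable [DecidableEq V] {I : Type*} {U U' T : I → Finset V} {X C : Finset V}

def missed (J : Finset I) (U : I → Finset V) (X : Finset V) : ℕ :=
  (J.filter fun i => Disjoint (U i) X).card

theorem missed_lt_missed_sdiff {J : Finset I} {i : I} (hi : i ∈ J)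
    (hUX : ¬Disjoint (U i) X) : missed J U X < missed J U (X \ U i) := by
  refine Finset.card_lt_card ⟨fun j hj => ?_, fun h => ?_⟩
  · simp only [Finset.mem_filter] at hj ⊢
    exact ⟨hj.1, hj.2.mono_right Finset.sdiff_subset⟩
  · exact hUX (Finset.mem_filter.1 (h (Finset.mem_filter.2 ⟨hi, Finset.disjoint_sdiff⟩))).2

theorem missed_union_add_missed_inter (J : Finset I) (U : I → Finset V)
    (X Y : Finset V) :
    missed J U (X ∪ Y) + missed J U (X ∩ Y) = missed J U X + missed J U Y +
      (J.filter fun i => ¬Disjoint (U i) X ∧ ¬Disjoint (U i) Y ∧ Disjoint (U i) (X ∩ Y)).card := by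
  simp only [missed, Finset.card_filter, ← Finset.sum_add_distrib]
  refine Finset.sum_congr rfl fun i _ => ?_
  have hX : Disjoint (U i) X → Disjoint (U i) (X ∩ Y) := (·.mono_right Finset.inter_subset_left)
  have hY : Disjoint (U i) Y → Disjoint (U i) (X ∩ Y) := (·.mono_right Finset.inter_subset_right)
  simp only [Finset.disjoint_union_right]
  by_cases Disjoint (U i) X <;> by_cases Disjoint (U i) Y <;> by_cases Disjoint (U i) (X ∩ Y) <;>
    simp_all

variable [Fintype I]

/-- In a branching packing each index counted here needs its own arc entering `X`. -/
def demand (U T : I → Finset V) (X : Finset V) : ℕ :=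
  (Finset.univ.filter fun i => Disjoint (U i) X ∧ ¬Disjoint (T i) X).card

theorem demand_sdiff (U T : I → Finset V) (C X : Finset V) :
    demand (fun i => U i \ C) (fun i => T i \ C) X = demand U T (X \ C) := by
  simp only [demand, disjoint_sdiff_comm]

theorem demand_le_demand (hU : ∀ i, U i ⊆ U' i) (X : Finset V) : demand U' T X ≤ demand U T X :=
  Finset.card_le_card fun i hi => by
    simp only [Finset.mem_filter, Finset.mem_univ, true_and] at hi ⊢
    exact ⟨hi.1.mono_left (hU i), hi.2⟩

theorem demand_lt_demand (hU : ∀ i, U i ⊆ U' i) {i : I} (hUi : Disjoint (U i) X)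
    (hTi : ¬Disjoint (T i) X) (hU'i : ¬Disjoint (U' i) X) : demand U' T X < demand U T X := by
  refine Finset.card_lt_card ⟨fun j hj => ?_, fun h => ?_⟩
  · simp only [Finset.mem_filter, Finset.mem_univ, true_and] at hj ⊢
    exact ⟨hj.1.mono_left (hU j), hj.2⟩
  · have := h (Finset.mem_filter.2 ⟨Finset.mem_univ i, hUi, hTi⟩)
    exact hU'i (Finset.mem_filter.1 this).2.1

theorem demand_eq_missed (hTU : ∀ i, T i \ U i ⊆ C) (hTC : ∀ i, ¬Disjoint (T i) C → C ⊆ T i)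
    (hX : ¬Disjoint X C) : demand U T X = missed (Finset.univ.filter fun i => C ⊆ T i) U X := by
  simp only [demand, missed, Finset.filter_filter]
  refine congrArg Finset.card (Finset.filter_congr fun i _ => ⟨fun ⟨hU, hT⟩ => ⟨?_, hU⟩,
    fun ⟨hCT, hU⟩ => ⟨hU, fun h => hX (h.mono_left hCT).symm⟩⟩)
  obtain ⟨t, htT, htX⟩ := Finset.not_disjoint_iff.1 hT
  have htC : t ∈ C := hTU i (Finset.mem_sdiff.2 ⟨htT, Finset.disjoint_right.1 hU htX⟩)
  exact hTC i (Finset.not_disjoint_iff.2 ⟨t, htT, htC⟩)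

end Demand

section Covering

variable [DecidableEq V] {I : Type*} [Fintype I] {A : Multiset (V × V)} {U T : I → Finset V}
  {C : Finset V}

def CoversDemand (A : Multiset (V × V)) (U T : I → Finset V) : Prop :=
  ∀ X, demand U T X ≤ inDeg A X

theorem HasBranchingPacking.coversDemand (h : HasBranchingPacking A U T) : CoversDemand A U T := by
  obtain ⟨B, hBA, hB⟩ := h
  intro X
  calc demand U T X = ∑ i, if Disjoint (U i) X ∧ ¬Disjoint (T i) X then 1 else 0 :=
        Finset.card_filter _ _
    _ ≤ ∑ i, inDeg (B i) X := Finset.sum_le_sum fun i _ => by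
        split_ifs with hi
        · exact (hB i).inDeg_pos hi.1 hi.2
        · exact Nat.zero_le _
    _ = inDeg (∑ i, B i) X := (inDeg_sum _ _ _).symm
    _ ≤ inDeg A X := inDeg_mono hBA X

theorem CoversDemand.erase [DecidableEq I] (h : CoversDemand A U T) {i : I} {x y : V}
    (hxy : (x, y) ∈ A) (hy : y ∈ T i)
    (hgood : ∀ X, y ∈ X → x ∉ X → ¬Disjoint (U i) X → demand U T X < inDeg A X) :
    CoversDemand (A.erase (x, y)) (Function.update U i (insert y (U i))) T := by
  have hUU' : ∀ j, U j ⊆ Function.update U i (insert y (U i)) j := by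
    intro j
    by_cases hj : j = i
    · subst hj
      simp
    · simp [hj]
  intro X
  have hdeg := inDeg_cons (x, y) (A.erase (x, y)) X
  rw [Multiset.cons_erase hxy] at hdeg
  have hle := demand_le_demand (T := T) hUU' X
  have hX := h X
  by_cases hent : arcEnters (x, y) X
  · rw [if_pos hent] at hdeg
    by_cases hUX : Disjoint (U i) X
    · have := demand_lt_demand hUU' hUX (Finset.not_disjoint_iff.2 ⟨y, hy, hent.1⟩)
        (Finset.not_disjoint_iff.2 ⟨y, by simp, hent.1⟩)
      omega
    · have := hgood X hent.1 hent.2 hUX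
      omega
  · rw [if_neg hent] at hdeg
    omega

theorem CoversDemand.sdiff_of_outClosed (h : CoversDemand A U T) (hC : OutClosed A C) :
    CoversDemand (A.filter (·.2 ∉ C)) (fun i => U i \ C) (fun i => T i \ C) := fun X =>
  calc demand (fun i => U i \ C) (fun i => T i \ C) X = demand U T (X \ C) := demand_sdiff U T C X
    _ ≤ inDeg A (X \ C) := h _
    _ ≤ inDeg (A.filter (·.2 ∉ C)) X := inDeg_le_inDeg_filter fun a ha ⟨h2, h1⟩ => by
        obtain ⟨h2X, h2C⟩ := Finset.mem_sdiff.1 h2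
        exact ⟨⟨h2X, fun h1X => h1 (Finset.mem_sdiff.2 ⟨h1X, fun h1C => h2C (hC a ha h1C)⟩)⟩, h2C⟩

theorem CoversDemand.filter_head_mem [Fintype V] (h : CoversDemand A U T) (hUT : ∀ i, U i ⊆ T i)
    (hT : ∀ i, OutClosed A (T i)) (C : Finset V) :
    CoversDemand (A.filter (·.2 ∈ C)) (fun i => T i \ C ∪ U i ∩ C) T := by
  intro X
  set J := Finset.univ.filter fun i => Disjoint (T i \ C ∪ U i ∩ C) X ∧ ¬Disjoint (T i) X
  have hJ : ∀ i ∈ J, ∀ v ∈ T i, v ∈ X → v ∈ C := fun i hi v hvT hvX => by_contra fun hvC =>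
    Finset.disjoint_left.1 (Finset.mem_filter.1 hi).2.1
      (Finset.mem_union_left _ (Finset.mem_sdiff.2 ⟨hvT, hvC⟩)) hvX
  -- the arcs entering `X ∩ C ∪ (⋃_{i ∈ J} T i)ᶜ` all enter `X` and end in `C`
  calc demand _ T X = J.card := rfl
    _ ≤ demand U T (X ∩ C ∪ (J.biUnion T)ᶜ) := Finset.card_le_card fun i hi => ?_
    _ ≤ inDeg A (X ∩ C ∪ (J.biUnion T)ᶜ) := h _
    _ ≤ inDeg (A.filter (·.2 ∈ C)) X := inDeg_le_inDeg_filter fun a ha ⟨h2, h1⟩ => ?_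
  · obtain ⟨-, hWX, hTX⟩ := Finset.mem_filter.1 hi
    refine Finset.mem_filter.2 ⟨Finset.mem_univ _, Finset.disjoint_left.2 fun u hu huX => ?_, ?_⟩
    · rcases Finset.mem_union.1 huX with huX | huX
      · exact Finset.disjoint_left.1 hWX (Finset.mem_union_right _
          (Finset.mem_inter.2 ⟨hu, (Finset.mem_inter.1 huX).2⟩)) (Finset.mem_inter.1 huX).1
      · exact Finset.mem_compl.1 huX (Finset.mem_biUnion.2 ⟨i, hi, hUT i hu⟩)
    · obtain ⟨t, htT, htX⟩ := Finset.not_disjoint_iff.1 hTX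
      exact Finset.not_disjoint_iff.2
        ⟨t, htT, Finset.mem_union_left _ (Finset.mem_inter.2 ⟨htX, hJ i hi t htT htX⟩)⟩
  · simp only [Finset.mem_union, Finset.mem_inter, Finset.mem_compl, not_or, not_not] at h1 h2
    obtain ⟨j, hj, h1T⟩ := Finset.mem_biUnion.1 h1.2
    have h2X : a.2 ∈ X ∧ a.2 ∈ C := h2.resolve_right
      fun h => h (Finset.mem_biUnion.2 ⟨j, hj, hT j a ha h1T⟩)
    exact ⟨⟨h2X.1, fun h1X => h1.1 ⟨h1X, hJ j hj _ h1T h1X⟩⟩, h2X.2⟩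

end Covering

section Exchange

variable [DecidableEq V] {I : Type*} [Fintype I] {A : Multiset (V × V)}
  {U T : I → Finset V} {C : Finset V}

/-- Removing `U i` from `Y` raises the demand, hence the in-degree, by at least one. -/
theorem CoversDemand.exists_arc_of_tight (h : CoversDemand A U T)
    (hTU : ∀ i, T i \ U i ⊆ C) (hTC : ∀ i, ¬Disjoint (T i) C → C ⊆ T i) {i : I} {Y : Finset V}
    (hY : inDeg A Y ≤ demand U T Y) (hYT : ¬Disjoint Y (T i \ U i)) (hYU : ¬Disjoint Y (U i)) :
    ∃ x y, (x, y) ∈ A ∧ x ∈ Y ∧ x ∈ U i ∧ y ∈ Y ∧ y ∉ U i := by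
  obtain ⟨t, htY, htTU⟩ := Finset.not_disjoint_iff.1 hYT
  have htC : t ∈ C := hTU i htTU
  have hiJ : i ∈ Finset.univ.filter fun j => C ⊆ T j := Finset.mem_filter.2
    ⟨Finset.mem_univ _, hTC i (Finset.not_disjoint_iff.2 ⟨t, (Finset.mem_sdiff.1 htTU).1, htC⟩)⟩
  have hlt : inDeg A Y < inDeg A (Y \ U i) := calc
    inDeg A Y ≤ demand U T Y := hY
    _ = missed _ U Y := demand_eq_missed hTU hTC (Finset.not_disjoint_iff.2 ⟨t, htY, htC⟩)
    _ < missed _ U (Y \ U i) := missed_lt_missed_sdiff hiJ (disjoint_comm.not.1 hYU)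
    _ = demand U T (Y \ U i) := (demand_eq_missed hTU hTC (Finset.not_disjoint_iff.2
          ⟨t, Finset.mem_sdiff.2 ⟨htY, (Finset.mem_sdiff.1 htTU).2⟩, htC⟩)).symm
    _ ≤ inDeg A (Y \ U i) := h _
  obtain ⟨⟨x, y⟩, hxy, ⟨hyY, hxY⟩, hnot⟩ := exists_arc_of_inDeg_lt hlt
  simp only [arcEnters, Finset.mem_sdiff, not_and, not_not] at hyY hxY hnot
  have hx : x ∈ Y := hnot hyY.1
  exact ⟨x, y, hxy, hx, hxY hx, hyY.1, hyY.2⟩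

/-- Submodularity of `inDeg` against the uncrossing identity for `missed`: if `U i` missed
`X ∩ Y`, the identity would have a positive defect. -/
theorem CoversDemand.inter_of_tight (h : CoversDemand A U T)
    (hTU : ∀ i, T i \ U i ⊆ C) (hTC : ∀ i, ¬Disjoint (T i) C → C ⊆ T i) {i : I} (hiC : C ⊆ T i)
    {X Y : Finset V} {y : V} (hyX : y ∈ X) (hyY : y ∈ Y) (hyC : y ∈ C)
    (hX : inDeg A X ≤ demand U T X) (hY : inDeg A Y ≤ demand U T Y)
    (hXU : ¬Disjoint (U i) X) (hYU : ¬Disjoint (U i) Y) :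
    inDeg A (X ∩ Y) ≤ demand U T (X ∩ Y) ∧ ¬Disjoint (U i) (X ∩ Y) := by
  set J := Finset.univ.filter fun j => C ⊆ T j
  have hdem : ∀ Z, y ∈ Z → demand U T Z = missed J U Z := fun Z hZ =>
    demand_eq_missed hTU hTC (Finset.not_disjoint_iff.2 ⟨y, hZ, hyC⟩)
  have hunion := h (X ∪ Y)
  have hinter := h (X ∩ Y)
  rw [hdem _ (Finset.mem_union_left _ hyX)] at hunion
  rw [hdem _ (Finset.mem_inter.2 ⟨hyX, hyY⟩)] at hinter ⊢
  rw [hdem _ hyX] at hX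
  rw [hdem _ hyY] at hY
  have hsub := inDeg_union_add_inDeg_inter_le A X Y
  have hunc := missed_union_add_missed_inter J U X Y
  have hi : ¬Disjoint (U i) (X ∩ Y) := fun hi => by
    have : 0 < (J.filter fun j => ¬Disjoint (U j) X ∧ ¬Disjoint (U j) Y ∧
        Disjoint (U j) (X ∩ Y)).card :=
      Finset.card_pos.2 ⟨i, Finset.mem_filter.2 ⟨Finset.mem_filter.2 ⟨Finset.mem_univ _, hiC⟩,
        hXU, hYU, hi⟩⟩
    omega
  exact ⟨by omega, hi⟩

theorem CoversDemand.exists_arc [Fintype V] (h : CoversDemand A U T) (hUT : ∀ i, U i ⊆ T i)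
    (hT : ∀ i, OutClosed A (T i)) (hTU : ∀ i, T i \ U i ⊆ C)
    (hTC : ∀ i, ¬Disjoint (T i) C → C ⊆ T i) {i : I} (hi : ¬T i ⊆ U i) :
    ∃ x y, (x, y) ∈ A ∧ x ∈ U i ∧ y ∈ T i ∧ y ∉ U i ∧
      ∀ X, y ∈ X → x ∉ X → ¬Disjoint (U i) X → demand U T X < inDeg A X := by
  -- the arc is taken out of a smallest tight set meeting `U i` and `T i \ U i`;
  -- `univ` is such a set, as `inDeg A univ = 0`
  set blocking := Finset.univ.filter fun Y : Finset V =>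
    inDeg A Y ≤ demand U T Y ∧ ¬Disjoint Y (T i \ U i) ∧ ¬Disjoint Y (U i)
  obtain ⟨t, htT, htU⟩ := Finset.not_subset.1 hi
  obtain ⟨u, hu⟩ : (U i).Nonempty := by
    by_contra! hU
    have hdem : 0 < demand U T Finset.univ := Finset.card_pos.2 ⟨i, Finset.mem_filter.2
      ⟨Finset.mem_univ _, hU ▸ Finset.disjoint_empty_left _,
        Finset.not_disjoint_iff.2 ⟨t, htT, Finset.mem_univ _⟩⟩⟩
    have := h Finset.univ
    rw [inDeg_univ] at this
    omega
  have huniv : Finset.univ ∈ blocking := Finset.mem_filter.2 ⟨Finset.mem_univ _,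
    (inDeg_univ A).trans_le (Nat.zero_le _),
    Finset.not_disjoint_iff.2 ⟨t, Finset.mem_univ _, Finset.mem_sdiff.2 ⟨htT, htU⟩⟩,
    Finset.not_disjoint_iff.2 ⟨u, Finset.mem_univ _, hu⟩⟩
  obtain ⟨Y, hY, hmin⟩ := Finset.exists_min_image blocking Finset.card ⟨_, huniv⟩
  obtain ⟨hYtight, hYT, hYU⟩ := (Finset.mem_filter.1 hY).2
  obtain ⟨x, y, hxy, hxY, hxU, hyY, hyU⟩ := h.exists_arc_of_tight hTU hTC hYtight hYT hYU
  have hyT : y ∈ T i := hT i _ hxy (hUT i hxU)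
  have hyC : y ∈ C := hTU i (Finset.mem_sdiff.2 ⟨hyT, hyU⟩)
  refine ⟨x, y, hxy, hxU, hyT, hyU, fun X hyX hxX hUX => ?_⟩
  by_contra! hX
  obtain ⟨hXY, hXYU⟩ := h.inter_of_tight hTU hTC (hTC i (Finset.not_disjoint_iff.2 ⟨y, hyT, hyC⟩))
    hyY hyX hyC hYtight hX (disjoint_comm.not.1 hYU) hUX
  have hmem : Y ∩ X ∈ blocking := Finset.mem_filter.2 ⟨Finset.mem_univ _, hXY,
    Finset.not_disjoint_iff.2 ⟨y, Finset.mem_inter.2 ⟨hyY, hyX⟩, Finset.mem_sdiff.2 ⟨hyT, hyU⟩⟩,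
    disjoint_comm.not.1 hXYU⟩
  exact (hmin _ hmem).not_gt (Finset.card_lt_card
    ⟨Finset.inter_subset_left, fun hsub => hxX (Finset.mem_inter.1 (hsub hxY)).2⟩)

end Exchange

section Existence

variable [DecidableEq V] [Fintype V] {I : Type*} [Fintype I] {A : Multiset (V × V)}
  {U T : I → Finset V}

theorem CoversDemand.hasBranchingPacking_of_sink {C : Finset V} (h : CoversDemand A U T)
    (hUT : ∀ i, U i ⊆ T i) (hT : ∀ i, OutClosed A (T i)) (hTU : ∀ i, T i \ U i ⊆ C)
    (hTC : ∀ i, ¬Disjoint (T i) C → C ⊆ T i) : HasBranchingPacking A U T := by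
  classical
  induction hn : ∑ i, (T i \ U i).card using Nat.strong_induction_on generalizing A U with
  | _ n ih =>
  by_cases hdone : ∀ i, T i ⊆ U i
  · exact hasBranchingPacking_of_subset hdone
  obtain ⟨i, hi⟩ := not_forall.1 hdone
  obtain ⟨x, y, hxy, hxU, hyT, hyU, hgood⟩ := h.exists_arc hUT hT hTU hTC hi
  set U' := Function.update U i (insert y (U i))
  have hUU' : ∀ j, U j ⊆ U' j := fun j => by
    by_cases hj : j = i
    · subst hj
      simp [U']
    · simp [U', hj]
  have hU'T : ∀ j, U' j ⊆ T j := fun j => by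
    by_cases hj : j = i
    · subst hj
      simpa [U'] using Finset.insert_subset hyT (hUT j)
    · simpa [U', hj] using hUT j
  have hlt : ∑ j, (T j \ U' j).card < n := hn ▸ Finset.sum_lt_sum
    (fun j _ => Finset.card_le_card (Finset.sdiff_subset_sdiff le_rfl (hUU' j)))
    ⟨i, Finset.mem_univ _, by
      simpa only [U', Function.update_self, Finset.sdiff_insert] using
        Finset.card_erase_lt_of_mem (Finset.mem_sdiff.2 ⟨hyT, hyU⟩)⟩
  have h' : HasBranchingPacking (A.erase (x, y)) U' T :=
    ih _ hlt (h.erase hxy hyT hgood) hU'T (fun j => (hT j).anti (Multiset.erase_le _ _))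
      (fun j => (Finset.sdiff_subset_sdiff le_rfl (hUU' j)).trans (hTU j)) rfl
  rw [← Multiset.cons_erase hxy, ← Multiset.singleton_add]
  exact (hasBranchingPacking_single hxU hyU).trans h' hUU' hU'T

theorem CoversDemand.hasBranchingPacking (h : CoversDemand A U T) (hUT : ∀ i, U i ⊆ T i)
    (hT : ∀ i, OutClosed A (T i)) : HasBranchingPacking A U T := by
  induction hn : ∑ i, (T i).card using Nat.strong_induction_on generalizing A U T with
  | _ n ih =>
  by_cases hdone : ∀ i, T i ⊆ U i
  · exact hasBranchingPacking_of_subset hdone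
  obtain ⟨i, hi⟩ := not_forall.1 hdone
  obtain ⟨t, htT, -⟩ := Finset.not_subset.1 hi
  obtain ⟨C, ⟨c, hcC, htc⟩, hC, hCC⟩ := exists_sink_component A t
  have hcT : c ∈ T i := (hT i).mem_of_reaches htT htc
  have hUW : ∀ j, U j ⊆ T j \ C ∪ U j ∩ C := fun j u hu => by
    by_cases huC : u ∈ C <;> simp [huC, hu, hUT j hu]
  have hWT : ∀ j, T j \ C ∪ U j ∩ C ⊆ T j := fun j =>
    Finset.union_subset Finset.sdiff_subset (Finset.inter_subset_left.trans (hUT j))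
  have hout : HasBranchingPacking (A.filter (·.2 ∉ C)) U (fun j => T j \ C ∪ U j ∩ C) := by
    have hlt : ∑ j, (T j \ C).card < n := hn ▸ Finset.sum_lt_sum
      (fun j _ => Finset.card_le_card Finset.sdiff_subset)
      ⟨i, Finset.mem_univ _, Finset.card_lt_card
        ⟨Finset.sdiff_subset, fun hsub => (Finset.mem_sdiff.1 (hsub hcT)).2 hcC⟩⟩
    have := (ih _ hlt (h.sdiff_of_outClosed hC) (fun j => Finset.sdiff_subset_sdiff (hUT j) le_rfl)
      (fun j a ha h1 => Finset.mem_sdiff.2 ⟨hT j a (Multiset.mem_of_mem_filter ha)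
        (Finset.mem_sdiff.1 h1).1, (Multiset.mem_filter.1 ha).2⟩) rfl).union_of_disjoint
      (R := fun j => U j ∩ C) fun j => Finset.sdiff_disjoint.mono_right Finset.inter_subset_right
    simpa only [Finset.sdiff_union_inter] using this
  have hin : HasBranchingPacking (A.filter (·.2 ∈ C)) (fun j => T j \ C ∪ U j ∩ C) T :=
    (h.filter_head_mem hUT hT C).hasBranchingPacking_of_sink hWT
      (fun j => (hT j).anti (Multiset.filter_le _ _))
      (fun j v hv => by_contra fun hvC => (Finset.mem_sdiff.1 hv).2
        (Finset.mem_union_left _ (Finset.mem_sdiff.2 ⟨(Finset.mem_sdiff.1 hv).1, hvC⟩)))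
      (fun j => (hT j).subset_of_not_disjoint hCC)
  rw [← Multiset.filter_add_not (·.2 ∈ C) A, add_comm]
  exact hout.trans hin hUW hWT

end Existence

theorem hasBranchingPacking_iff_coversDemand [DecidableEq V] [Fintype V] {I : Type*} [Fintype I]
    {A : Multiset (V × V)} {U T : I → Finset V} (hUT : ∀ i, U i ⊆ T i)
    (hT : ∀ i, OutClosed A (T i)) : HasBranchingPacking A U T ↔ CoversDemand A U T :=
  ⟨HasBranchingPacking.coversDemand, fun h => h.hasBranchingPacking hUT hT⟩

theorem demand_add_card_filter_mem [DecidableEq V] [Fintype V] {S : Type*} [Fintype S]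
    (A : Multiset (V × V)) (π : S → V) (X : Finset V) :
    demand (fun s => {π s}) (fun s => QD A {π s}) X + (Finset.univ.filter fun s => π s ∈ X).card =
      (Finset.univ.filter fun s => π s ∈ PD A X).card := by
  simp only [demand, Finset.card_filter, ← Finset.sum_add_distrib]
  refine Finset.sum_congr rfl fun s _ => ?_
  have hPD : π s ∈ X → π s ∈ PD A X := fun h => subset_PD A X h
  by_cases hX : π s ∈ X <;> by_cases hP : π s ∈ PD A X <;>
    simp_all [Finset.disjoint_singleton_left, not_disjoint_QD_singleton_iff]

theorem kamiyama_katoh_takizawa_general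
    (V : Type) [Fintype V] [DecidableEq V]
    (A : Multiset (V × V))
    (S : Type) [Fintype S] (π : S → V) :
    (∃ B : S → Multiset (V × V),
        (∑ s : S, B s) ≤ A ∧ ∀ s : S, IsArborOn (B s) (QD A {π s}) (π s)) ↔
    ∀ X : Finset V,
      ((Finset.univ.filter fun s => π s ∈ PD A X).card : ℤ) -
          (Finset.univ.filter fun s => π s ∈ X).card
        ≤ (inDeg A X : ℤ) := by
  have hroot : ∀ s, π s ∈ QD A {π s} := fun s => mem_QD_singleton.2 .refl
  have hpack : (∃ B : S → Multiset (V × V), (∑ s, B s) ≤ A ∧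
      ∀ s, IsArborOn (B s) (QD A {π s}) (π s)) ↔
      HasBranchingPacking A (fun s => {π s}) (fun s => QD A {π s}) := by
    simp only [isArborOn_iff_isBranching, hroot, true_and, HasBranchingPacking]
  rw [hpack, hasBranchingPacking_iff_coversDemand (fun s => Finset.singleton_subset_iff.2 (hroot s))
    fun s => outClosed_QD A _]
  refine forall_congr' fun X => ?_
  have := demand_add_card_filter_mem A π X
  omega

/-- **Kamiyama–Katoh–Takizawa theorem.** There is a packing of reachability
`s`-arborescences in the digraph `D = (V, A)`, one rooted at each element `s` of
the multiset `S`, iff `d⁻_A(X) ≥ |S_{P_D^X}| − |S_X|` for every `X ⊆ V`. -/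
theorem kamiyama_katoh_takizawa
    (V : Type) [Fintype V] [DecidableEq V]
    (A : Multiset (V × V)) (hA : ∀ a ∈ A, a.1 ≠ a.2)
    (S : Type) [Fintype S] [DecidableEq S] (π : S → V) :
    (∃ B : S → Multiset (V × V),
        (∑ s : S, B s) ≤ A ∧ ∀ s : S, IsArborOn (B s) (QD A {π s}) (π s)) ↔
    ∀ X : Finset V,
      ((Finset.univ.filter fun s => π s ∈ PD A X).card : ℤ) -
          (Finset.univ.filter fun s => π s ∈ X).card
        ≤ (inDeg A X : ℤ) :=
  kamiyama_katoh_takizawa_general V A S π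

end ArborPaper
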